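/- arXiv:1810.07510 — 5 statements merged into one kernel-verified Lean document; each statement's English description precedes it below -/
import Mathlib

section
/- For every real ε with 0 < ε < 1, every natural number m, every finite set J and every function p : J → ℝ with 0 ≤ p j for all j ∈ J and ∑_{j ∈ J} p j ≤ m, there exists a natural number k with 1 ≤ k ≤ ⌈1/ε²⌉ such that ∑_{j ∈ J, ε^{k+1} ≤ p j < ε^k} p j ≤ ε² · m. -/
/-!
The bands `[ε ^ (k + 1), ε ^ k)` for `k = 1, …, N` with `N = ⌈1 / ε ^ 2⌉` are disjoint, so the
loads of the `N` bands add up to at most `m`. By averaging, some band carries at most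
`m / N ≤ ε ^ 2 * m`.
-/

open Finset Function

theorem Finset.exists_card_nsmul_sum_le_of_pairwiseDisjoint {ι α M : Type*} [DecidableEq α]
    [AddCommMonoid M] [LinearOrder M] [IsOrderedCancelAddMonoid M]
    {s : Finset ι} {t : ι → Finset α} {u : Finset α} {f : α → M}
    (hs : s.Nonempty) (hdisj : (s : Set ι).PairwiseDisjoint t) (htu : ∀ i ∈ s, t i ⊆ u)
    (hf : ∀ a ∈ u, 0 ≤ f a) :
    ∃ i ∈ s, #s • ∑ a ∈ t i, f a ≤ ∑ a ∈ u, f a := by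
  have hsum : ∑ i ∈ s, ∑ a ∈ t i, f a ≤ ∑ a ∈ u, f a := by
    rw [← sum_biUnion hdisj]
    exact sum_le_sum_of_subset_of_nonneg (biUnion_subset.2 htu) fun a ha _ ↦ hf a ha
  refine exists_le_of_sum_le hs ?_
  rw [← smul_sum, sum_const]
  exact nsmul_le_nsmul_right hsum _

theorem pairwise_disjoint_filter_pow_le_lt_pow {J R : Type*} [Semiring R] [LinearOrder R]
    [IsOrderedRing R] (u : Finset J) (p : J → R) {ε : R} (hε0 : 0 ≤ ε) (hε1 : ε ≤ 1) :
    Pairwise (Disjoint on fun k : ℕ ↦ u.filter (fun j ↦ ε ^ (k + 1) ≤ p j ∧ p j < ε ^ k)) := by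
  intro k l hkl
  have hIco := (pow_right_anti₀ hε0 hε1).pairwise_disjoint_on_Ico_succ hkl
  exact disjoint_filter_filter' _ _ fun q hqk hql j hj ↦
    Set.disjoint_left.1 hIco (hqk j hj) (hql j hj)

theorem one_le_ceil_one_div_mul {K : Type*} [Field K] [LinearOrder K] [IsStrictOrderedRing K]
    [FloorSemiring K] {x : K} (hx : 0 < x) : 1 ≤ (⌈1 / x⌉₊ : K) * x :=
  (div_le_iff₀ hx).1 (Nat.le_ceil _)

theorem stmt_0 (ε : ℝ) (hε0 : 0 < ε) (hε1 : ε < 1) (m : ℕ)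
    {J : Type*} [Fintype J] (p : J → ℝ)
    (hp : ∀ j, 0 ≤ p j) (hsum : ∑ j, p j ≤ (m : ℝ)) :
    ∃ k : ℕ, 1 ≤ k ∧ k ≤ ⌈1 / ε ^ 2⌉₊ ∧
      ∑ j ∈ Finset.univ.filter (fun j => ε ^ (k + 1) ≤ p j ∧ p j < ε ^ k), p j
        ≤ ε ^ 2 * (m : ℝ) := by
  classical
  set N := ⌈1 / ε ^ 2⌉₊
  have hN : 1 ≤ (N : ℝ) * ε ^ 2 := one_le_ceil_one_div_mul (by positivity)
  obtain ⟨k, hk, hle⟩ := exists_card_nsmul_sum_le_of_pairwiseDisjoint (s := Icc 1 N) (f := p)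
    (nonempty_Icc.2 (Nat.one_le_ceil_iff.2 (by positivity)))
    ((pairwise_disjoint_filter_pow_le_lt_pow univ p hε0.le hε1.le).set_pairwise _)
    (fun _ _ ↦ filter_subset _ _) (fun j _ ↦ hp j)
  rw [Nat.card_Icc, Nat.add_sub_cancel, nsmul_eq_mul] at hle
  set S := ∑ j ∈ univ.filter (fun j => ε ^ (k + 1) ≤ p j ∧ p j < ε ^ k), p j
  have hS : 0 ≤ S := sum_nonneg fun j _ ↦ hp j
  refine ⟨k, (mem_Icc.1 hk).1, (mem_Icc.1 hk).2, ?_⟩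
  calc S ≤ (N * ε ^ 2) * S := le_mul_of_one_le_left hS hN
    _ = ε ^ 2 * (N * S) := by ring
    _ ≤ ε ^ 2 * m := by gcongr; exact hle.trans hsum
end

section
/- Let ε be a real number with 0 < ε ≤ 1, let k be a natural number, let C ≥ 0 be real, let J be a finite set with p : J → ℝ satisfying 0 ≤ p j for all j, let σ : J → Fin m be a schedule such that for every machine i the load ∑_{j : σ j = i} p j is at most C, and let L ⊆ J be a set of jobs with p j ≥ ε^k for every j ∈ L. Then for every machine i we have (∑_{j : σ j = i} p j) + ε^{k+1} · |{j ∈ L : σ j = i}| ≤ (1 + ε) · C. -/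
open Finset

theorem card_mul_le_sum_of_subset {J : Type*} {s t : Finset J} {p : J → ℝ} {a : ℝ}
    (hst : s ⊆ t) (hs : ∀ j ∈ s, a ≤ p j) (ht : ∀ j ∈ t, 0 ≤ p j) :
    #s * a ≤ ∑ j ∈ t, p j :=
  calc #s * a = #s • a := (nsmul_eq_mul _ _).symm
    _ ≤ ∑ j ∈ s, p j := card_nsmul_le_sum s p a hs
    _ ≤ ∑ j ∈ t, p j := sum_le_sum_of_subset_of_nonneg hst fun j hj _ => ht j hj

theorem stmt_1_general {m : ℕ} (ε : ℝ) (hε0 : 0 < ε)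
    (k : ℕ) (C : ℝ)
    {J : Type*} [Fintype J] (p : J → ℝ) (hp : ∀ j, 0 ≤ p j)
    (σ : J → Fin m)
    (hload : ∀ i : Fin m, ∑ j ∈ Finset.univ.filter (fun j => σ j = i), p j ≤ C)
    (L : Finset J) (hL : ∀ j ∈ L, ε ^ k ≤ p j) :
    ∀ i : Fin m,
      (∑ j ∈ Finset.univ.filter (fun j => σ j = i), p j)
        + ε ^ (k + 1) * ((L.filter (fun j => σ j = i)).card : ℝ)
      ≤ (1 + ε) * C := by
  intro i
  have hlarge : #(L.filter (σ · = i)) * ε ^ k ≤ C :=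
    (card_mul_le_sum_of_subset (filter_subset_filter _ (subset_univ L))
      (fun j hj => hL j (mem_filter.mp hj).1) (fun j _ => hp j)).trans (hload i)
  calc _ = ∑ j ∈ univ.filter (σ · = i), p j + ε * (#(L.filter (σ · = i)) * ε ^ k) := by ring
    _ ≤ C + ε * C := by gcongr; exact hload i
    _ = (1 + ε) * C := by ring

theorem stmt_1 {m : ℕ} (ε : ℝ) (hε0 : 0 < ε) (hε1 : ε ≤ 1)
    (k : ℕ) (C : ℝ) (hC : 0 ≤ C)
    {J : Type*} [Fintype J] (p : J → ℝ) (hp : ∀ j, 0 ≤ p j)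
    (σ : J → Fin m)
    (hload : ∀ i : Fin m, ∑ j ∈ Finset.univ.filter (fun j => σ j = i), p j ≤ C)
    (L : Finset J) (hL : ∀ j ∈ L, ε ^ k ≤ p j) :
    ∀ i : Fin m,
      (∑ j ∈ Finset.univ.filter (fun j => σ j = i), p j)
        + ε ^ (k + 1) * ((L.filter (fun j => σ j = i)).card : ℝ)
      ≤ (1 + ε) * C :=
  stmt_1_general ε hε0 k C p hp σ hload L hL
end

section
/- Let J be a finite set of jobs with sizes p : J → ℝ, 0 ≤ p j for all j, a bag assignment bag : J → Fin b, m machines, a real ε with 0 < ε < 1, and a natural number k ≥ 1. Let NP ⊆ Fin b be a set of bags such that every bag l ∈ NP contains at least one job j with p j < ε^{k+1}, and for l ∈ NP let pmax l be the maximum of p j over jobs j of bag l with p j < ε^{k+1}. Define the modified instance with job set J' = J ⊕ {j ∈ J : bag j ∈ NP and p j ≥ ε^k}, sizes p'(Sum.inl j) = pmax (bag j) if bag j ∈ NP and p j ≥ ε^{k+1} and p'(Sum.inl j) = p j otherwise, p'(Sum.inr j) = p j, and bag assignment bag' : J' → (Fin b ⊕ Fin b) with bag'(Sum.inl j) = Sum.inl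 (bag j) and bag'(Sum.inr j) = Sum.inr (bag j). If there exists a feasible schedule of J on m machines with makespan at most C (C ≥ 0), then there exists a feasible schedule of J' on m machines with makespan at most (1 + ε) · C. -/
/-!
Keep the schedule and put each copy of a large job on the machine of its original. A large job
of a non-priority bag is then replaced on its machine by a filler of size `pmax l < ε^(k+1) ≤ ε · p j`
plus a copy of size `p j`, and a medium one by a filler smaller than itself, so every job of size
`p` contributes at most `(1 + ε) p` to its machine. Copies live in fresh bags, and two copies
sharing a bag come from two originals sharing a bag, so feasibility is preserved.
-/

attribute [local instance] Classical.propDecidable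

open Finset

section Schedules

variable {J B M : Type*}

def IsBagFeasible (bag : J → B) (σ : J → M) : Prop :=
  ∀ j₁ j₂, j₁ ≠ j₂ → bag j₁ = bag j₂ → σ j₁ ≠ σ j₂

theorem IsBagFeasible.comp {J' : Type*} {bag : J → B} {σ : J → M} (h : IsBagFeasible bag σ)
    {e : J' → J} (he : Function.Injective e) : IsBagFeasible (bag ∘ e) (σ ∘ e) :=
  fun _ _ hne hbag => h _ _ (he.ne hne) hbag

theorem IsBagFeasible.sumElim {J' B' : Type*} {bag : J → B} {σ : J → M} {bag' : J' → B'}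
    {σ' : J' → M} (h : IsBagFeasible bag σ) (h' : IsBagFeasible bag' σ') :
    IsBagFeasible (Sum.elim (fun j => (Sum.inl (bag j) : B ⊕ B')) (fun j => Sum.inr (bag' j)))
      (Sum.elim σ σ') := by
  rintro (x | x) (y | y) hne hbag
  · exact h x y (fun hxy => hne (hxy ▸ rfl)) (Sum.inl_injective hbag)
  · exact absurd hbag Sum.inl_ne_inr
  · exact absurd hbag Sum.inr_ne_inl
  · exact h' x y (fun hxy => hne (hxy ▸ rfl)) (Sum.inr_injective hbag)

theorem sum_filter_sumElim_subtype [Fintype J] [DecidableEq M] (q : J → Prop) [DecidablePred q]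
    [Fintype {j // q j}] (σ : J → M) (w v : J → ℝ) (i : M) :
    ∑ x ∈ univ.filter (fun x => Sum.elim σ (fun j : {j // q j} => σ j.1) x = i),
        Sum.elim w (fun j => v j.1) x
      = ∑ j ∈ univ.filter (fun j => σ j = i), (w j + if q j then v j else 0) := by
  rw [sum_filter, Fintype.sum_sum_type, sum_add_distrib, sum_filter]
  refine congrArg₂ (· + ·) rfl <| (sum_subtype (univ.filter q) (by simp)
    (fun j => if σ j = i then v j else 0)).symm.trans ?_
  rw [sum_filter, sum_filter]
  exact sum_congr rfl fun j _ => by split_ifs <;> rfl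

end Schedules

theorem filler_add_copy_le {x f ε : ℝ} {k : ℕ} (hx : 0 ≤ x) (hε0 : 0 ≤ ε) (hε1 : ε ≤ 1)
    {P : Prop} [Decidable P] (hf : P → f ≤ ε ^ (k + 1)) :
    (if P ∧ ε ^ (k + 1) ≤ x then f else x) + (if P ∧ ε ^ k ≤ x then x else 0) ≤ (1 + ε) * x := by
  have hpow : ε ^ (k + 1) ≤ ε ^ k := pow_le_pow_of_le_one hε0 hε1 k.le_succ
  by_cases hlarge : P ∧ ε ^ k ≤ x
  · have hfx : f ≤ ε * x := calc
      f ≤ ε ^ (k + 1) := hf hlarge.1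
      _ = ε * ε ^ k := pow_succ' ε k
      _ ≤ ε * x := mul_le_mul_of_nonneg_left hlarge.2 hε0
    rw [if_pos ⟨hlarge.1, hpow.trans hlarge.2⟩, if_pos hlarge]
    linarith
  · rw [if_neg hlarge]
    split_ifs with hmed
    · linarith [hf hmed.1, hmed.2, mul_nonneg hε0 hx]
    · nlinarith

theorem stmt_2_general {J : Type*} [Fintype J] {b : ℕ} (m : ℕ)
    (p : J → ℝ) (hp : ∀ j, 0 ≤ p j)
    (bag : J → Fin b)
    (ε : ℝ) (hε0 : 0 < ε) (hε1 : ε < 1)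
    (k : ℕ)
    (NP : Finset (Fin b))
    (pmax : Fin b → ℝ)
    (hpmaxMem : ∀ l ∈ NP, ∃ j, bag j = l ∧ p j < ε ^ (k + 1) ∧ pmax l = p j)
    (C : ℝ)
    (hsched : ∃ σ : J → Fin m,
      (∀ j₁ j₂, j₁ ≠ j₂ → bag j₁ = bag j₂ → σ j₁ ≠ σ j₂) ∧
      (∀ i : Fin m, ∑ j ∈ Finset.univ.filter (fun j => σ j = i), p j ≤ C)) :
    ∃ σ' : (J ⊕ {j : J // bag j ∈ NP ∧ ε ^ k ≤ p j}) → Fin m,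
      (∀ x y, x ≠ y →
          Sum.elim (fun j => (Sum.inl (bag j) : Fin b ⊕ Fin b))
            (fun j => Sum.inr (bag j.1)) x
            = Sum.elim (fun j => (Sum.inl (bag j) : Fin b ⊕ Fin b))
                (fun j => Sum.inr (bag j.1)) y
          → σ' x ≠ σ' y) ∧
      (∀ i : Fin m,
        ∑ x ∈ Finset.univ.filter (fun x => σ' x = i),
          Sum.elim
            (fun j => if bag j ∈ NP ∧ ε ^ (k + 1) ≤ p j then pmax (bag j) else p j)
            (fun j => p j.1) x
          ≤ (1 + ε) * C) := by
  obtain ⟨σ, hσ, hload⟩ := hsched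
  have hfeas : IsBagFeasible bag σ := hσ
  have hpmax : ∀ l ∈ NP, pmax l ≤ ε ^ (k + 1) := by
    intro l hl
    obtain ⟨j, -, hj, hpj⟩ := hpmaxMem l hl
    exact hpj ▸ hj.le
  refine ⟨Sum.elim σ (fun j => σ j.1), hfeas.sumElim (hfeas.comp Subtype.val_injective), fun i => ?_⟩
  calc _ = ∑ j ∈ univ.filter (fun j => σ j = i),
          ((if bag j ∈ NP ∧ ε ^ (k + 1) ≤ p j then pmax (bag j) else p j)
            + if bag j ∈ NP ∧ ε ^ k ≤ p j then p j else 0) :=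
        sum_filter_sumElim_subtype _ σ _ p i
    _ ≤ ∑ j ∈ univ.filter (fun j => σ j = i), (1 + ε) * p j :=
        sum_le_sum fun j _ => filler_add_copy_le (hp j) hε0.le hε1.le (hpmax _)
    _ = (1 + ε) * ∑ j ∈ univ.filter (fun j => σ j = i), p j := (mul_sum ..).symm
    _ ≤ (1 + ε) * C := mul_le_mul_of_nonneg_left (hload i) (by linarith)

theorem stmt_2 {J : Type*} [Fintype J] {b : ℕ} (m : ℕ)
    (p : J → ℝ) (hp : ∀ j, 0 ≤ p j)
    (bag : J → Fin b)
    (ε : ℝ) (hε0 : 0 < ε) (hε1 : ε < 1)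
    (k : ℕ) (hk : 1 ≤ k)
    (NP : Finset (Fin b))
    (hNP : ∀ l ∈ NP, ∃ j, bag j = l ∧ p j < ε ^ (k + 1))
    (pmax : Fin b → ℝ)
    (hpmaxUB : ∀ l ∈ NP, ∀ j, bag j = l → p j < ε ^ (k + 1) → p j ≤ pmax l)
    (hpmaxMem : ∀ l ∈ NP, ∃ j, bag j = l ∧ p j < ε ^ (k + 1) ∧ pmax l = p j)
    (C : ℝ) (hC : 0 ≤ C)
    (hsched : ∃ σ : J → Fin m,
      (∀ j₁ j₂, j₁ ≠ j₂ → bag j₁ = bag j₂ → σ j₁ ≠ σ j₂) ∧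
      (∀ i : Fin m, ∑ j ∈ Finset.univ.filter (fun j => σ j = i), p j ≤ C)) :
    ∃ σ' : (J ⊕ {j : J // bag j ∈ NP ∧ ε ^ k ≤ p j}) → Fin m,
      (∀ x y, x ≠ y →
          Sum.elim (fun j => (Sum.inl (bag j) : Fin b ⊕ Fin b))
            (fun j => Sum.inr (bag j.1)) x
            = Sum.elim (fun j => (Sum.inl (bag j) : Fin b ⊕ Fin b))
                (fun j => Sum.inr (bag j.1)) y
          → σ' x ≠ σ' y) ∧
      (∀ i : Fin m,
        ∑ x ∈ Finset.univ.filter (fun x => σ' x = i),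
          Sum.elim
            (fun j => if bag j ∈ NP ∧ ε ^ (k + 1) ≤ p j then pmax (bag j) else p j)
            (fun j => p j.1) x
          ≤ (1 + ε) * C) :=
  stmt_2_general m p hp bag ε hε0 hε1 k NP pmax hpmaxMem C hsched
end

section
/- Let m, r be natural numbers, let n : Fin r → ℕ, and let F : Fin r → Finset (Fin m) be such that for every l, |F l| < m and n l ≤ m - |F l|. Then there exist functions g : (l : Fin r) → Fin (n l) → Fin m such that (i) for each l, g l is injective; (ii) for each l and each a : Fin (n l), g l a ∉ F l; and (iii) for every machine i : Fin m, ∑_{l} |{a : Fin (n l) | g l a = i}| ≤ ⌈∑_{l} (n l : ℝ) / (m - |F l|)⌉. -/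
/-!
Let `A l` be the machines allowed for bag `l`. Match every allowed pair `(l, i)` injectively into
slots: `C` capacity slots per machine `i`, or one of `#(A l) - n l` spare slots of bag `l`. A pair
that gets a capacity slot is kept; then every bag keeps at least `n l` pairs and every machine is
kept at most `C` times. Hall's condition for a set `W` of pairs with `w l` pairs in bag `l`, over
`u` machines, follows from `w l ≤ min #(A l) u ≤ (n l / #(A l)) u + (#(A l) - n l)` summed over
the bags met by `W`, using `∑ l, n l / #(A l) ≤ C`.
-/

open Finset

lemma le_div_mul_add_sub {a n u w : ℝ} (hn : 0 ≤ n) (hna : n ≤ a) (hwa : w ≤ a) (hwu : w ≤ u) :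
    w ≤ n / a * u + (a - n) := by
  rcases (hn.trans hna).eq_or_lt with rfl | ha
  · simp [le_antisymm hna hn, hwa]
  rw [div_mul_eq_mul_div, ← sub_nonneg, div_add' _ _ _ ha.ne', div_sub' ha.ne']
  apply div_nonneg _ ha.le
  nlinarith [mul_nonneg (sub_nonneg.2 hwa) (sub_nonneg.2 hna), mul_le_mul_of_nonneg_left hwu hn]

namespace LoadBalancing

variable {ι α : Type*} {A : ι → Finset α}

abbrev AllowedPair (A : ι → Finset α) := {p : ι × α // p.2 ∈ A p.1}

lemma AllowedPair.injOn_snd (l : ι) :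
    Set.InjOn (fun p : AllowedPair A => p.1.2) {p | p.1.1 = l} :=
  fun _ hp _ hq h => Subtype.ext (Prod.ext (hp.trans hq.symm) h)

variable [DecidableEq ι] [DecidableEq α] {n : ι → ℕ} {C : ℕ}

variable (A n C) in
abbrev Slot := (α × Fin C) ⊕ Σ l, Fin (#(A l) - n l)

def Fits (p : AllowedPair A) : Slot A n C → Prop
  | .inl s => s.1 = p.1.2
  | .inr s => s.1 = p.1.1

instance : DecidableRel (Fits (A := A) (n := n) (C := C))
  | p, .inl s => inferInstanceAs (Decidable (s.1 = p.1.2))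
  | p, .inr s => inferInstanceAs (Decidable (s.1 = p.1.1))

lemma Fits.mem_image_inl {p : AllowedPair A} {s : Slot A n C} (h : Fits p s)
    (hs : s.isLeft) : s ∈ univ.image fun c => .inl (p.1.2, c) := by
  rcases s with ⟨i, c⟩ | _
  · obtain rfl : i = p.1.2 := h
    exact mem_image_of_mem _ (mem_univ c)
  · simp at hs

lemma Fits.mem_image_inr {p : AllowedPair A} {s : Slot A n C} (h : Fits p s)
    (hs : ¬s.isLeft) : s ∈ univ.image fun j => .inr ⟨p.1.1, j⟩ := by
  rcases s with _ | ⟨l, j⟩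
  · simp at hs
  · obtain rfl : l = p.1.1 := h
    exact mem_image_of_mem _ (mem_univ j)

variable [Fintype ι]

lemma card_le_mul_add_sum_sub (hn : ∀ l, n l ≤ #(A l)) (hC : ∑ l, (n l : ℝ) / #(A l) ≤ C)
    (W : Finset (AllowedPair A)) :
    #W ≤ #(W.image (·.1.2)) * C + ∑ l ∈ W.image (·.1.1), (#(A l) - n l) := by
  set U := W.image (·.1.2)
  set B := W.image (·.1.1)
  have hfiber (l : ι) : #{p ∈ W | p.1.1 = l} ≤ #(A l) ∧ #{p ∈ W | p.1.1 = l} ≤ #U := by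
    have hinj : Set.InjOn (·.1.2) (↑{p ∈ W | p.1.1 = l} : Set (AllowedPair A)) :=
      (AllowedPair.injOn_snd l).mono fun p hp => by simp_all
    refine ⟨card_le_card_of_injOn _ (fun p hp => ?_) hinj,
      card_le_card_of_injOn _ (fun p hp => mem_image_of_mem _ (mem_filter.1 hp).1) hinj⟩
    obtain rfl : p.1.1 = l := (mem_filter.1 hp).2
    exact p.2
  have hsumB : ∑ l ∈ B, (n l : ℝ) / #(A l) ≤ C :=
    (sum_le_sum_of_subset_of_nonneg (subset_univ B) fun _ _ _ => by positivity).trans hC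
  have hreal : (#W : ℝ) ≤ #U * C + ∑ l ∈ B, ((#(A l) : ℝ) - n l) :=
    calc (#W : ℝ)
        = ∑ l ∈ B, (#{p ∈ W | p.1.1 = l} : ℝ) := mod_cast card_eq_sum_card_image _ W
      _ ≤ ∑ l ∈ B, ((n l : ℝ) / #(A l) * #U + (#(A l) - n l)) := by
          gcongr with l
          exact le_div_mul_add_sub (by positivity) (mod_cast hn l) (mod_cast (hfiber l).1)
            (mod_cast (hfiber l).2)
      _ = (∑ l ∈ B, (n l : ℝ) / #(A l)) * #U + ∑ l ∈ B, ((#(A l) : ℝ) - n l) := by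
          rw [sum_add_distrib, sum_mul]
      _ ≤ #U * C + ∑ l ∈ B, ((#(A l) : ℝ) - n l) := by
          rw [mul_comm]; gcongr
  rw [← Nat.cast_le (α := ℝ)]
  push_cast [Nat.cast_sub (hn _)]
  exact hreal

variable [Fintype α]

lemma AllowedPair.card_filter_fst_eq (l : ι) : #{p : AllowedPair A | p.1.1 = l} = #(A l) := by
  refine card_nbij (·.1.2) (fun p hp => ?_) ((AllowedPair.injOn_snd l).mono fun p hp => by simp_all)
    ?_
  · obtain rfl : p.1.1 = l := by simpa using hp
    exact p.2
  · intro i hi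
    exact ⟨⟨(l, i), hi⟩, by simp, rfl⟩

lemma card_le_card_filter_fits (hn : ∀ l, n l ≤ #(A l)) (hC : ∑ l, (n l : ℝ) / #(A l) ≤ C)
    (W : Finset (AllowedPair A)) :
    #W ≤ #{s : Slot A n C | ∃ p ∈ W, Fits p s} := by
  refine (card_le_mul_add_sum_sub hn hC W).trans ?_
  calc #(W.image (·.1.2)) * C + ∑ l ∈ W.image (·.1.1), (#(A l) - n l)
      = #((W.image (·.1.2) ×ˢ (univ : Finset (Fin C))).disjSum
          ((W.image (·.1.1)).sigma fun l => (univ : Finset (Fin (#(A l) - n l))))) := by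
        simp [card_sigma]
    _ ≤ _ := by
        refine card_le_card fun s hs => ?_
        rw [mem_filter]
        rcases s with ⟨i, c⟩ | ⟨l, j⟩
        · obtain ⟨p, hp, rfl⟩ := mem_image.1 (mem_product.1 (inl_mem_disjSum.1 hs)).1
          exact ⟨mem_univ _, p, hp, rfl⟩
        · obtain ⟨p, hp, rfl⟩ := mem_image.1 (mem_sigma.1 (inr_mem_disjSum.1 hs)).1
          exact ⟨mem_univ _, p, hp, rfl⟩

lemma exists_kept_pairs (hn : ∀ l, n l ≤ #(A l)) (hC : ∑ l, (n l : ℝ) / #(A l) ≤ C) :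
    ∃ K : Finset (AllowedPair A),
      (∀ l, n l ≤ #{p ∈ K | p.1.1 = l}) ∧ ∀ i, #{p ∈ K | p.1.2 = i} ≤ C := by
  obtain ⟨f, hf, hfits⟩ := (Fintype.all_card_le_filter_rel_iff_exists_injective
    (Fits (n := n) (C := C))).1 (card_le_card_filter_fits hn hC)
  refine ⟨({p | (f p).isLeft} : Finset _), fun l => ?_, fun i => ?_⟩
  · have hdropped : #{p ∈ {p : AllowedPair A | p.1.1 = l} | ¬(f p).isLeft} ≤ #(A l) - n l := by
      refine (card_le_card_of_injOn f (t := univ.image fun j => .inr ⟨l, j⟩) (fun p hp => ?_)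
        hf.injOn).trans (card_image_le.trans_eq (card_fin _))
      obtain ⟨hl, hdrop⟩ := mem_filter.1 hp
      obtain rfl : p.1.1 = l := (mem_filter.1 hl).2
      exact (hfits p).mem_image_inr hdrop
    have hsplit := card_filter_add_card_filter_not (s := {p : AllowedPair A | p.1.1 = l})
      (fun p => (f p).isLeft)
    rw [AllowedPair.card_filter_fst_eq] at hsplit
    rw [filter_comm]
    have := hn l
    omega
  · refine (card_le_card_of_injOn f (t := univ.image fun c => .inl (i, c)) (fun p hp => ?_)
      hf.injOn).trans (card_image_le.trans_eq (card_fin _))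
    obtain ⟨hkept, rfl⟩ := mem_filter.1 hp
    exact (hfits p).mem_image_inl (mem_filter.1 hkept).2

theorem exists_subsets_card_eq_of_sum_div_le (hn : ∀ l, n l ≤ #(A l))
    (hC : ∑ l, (n l : ℝ) / #(A l) ≤ C) :
    ∃ S : ι → Finset α, (∀ l, S l ⊆ A l) ∧ (∀ l, #(S l) = n l) ∧ ∀ i, #{l | i ∈ S l} ≤ C := by
  obtain ⟨K, hbag, hmachine⟩ := exists_kept_pairs hn hC
  have hkept (l : ι) : ∃ s ⊆ {p ∈ K | p.1.1 = l}.image (·.1.2), #s = n l := by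
    refine exists_subset_card_eq ((hbag l).trans_eq (card_image_of_injOn ?_).symm)
    exact (AllowedPair.injOn_snd l).mono fun p hp => (mem_filter.1 hp).2
  choose S hSK hS using hkept
  refine ⟨S, fun l i hi => ?_, hS, fun i => ?_⟩
  · obtain ⟨p, hp, rfl⟩ := mem_image.1 (hSK l hi)
    obtain rfl := (mem_filter.1 hp).2
    exact p.2
  · refine (card_le_card fun l hl => ?_).trans
      ((card_image_le (f := (·.1.1))).trans (hmachine i))
    obtain ⟨p, hp, rfl⟩ := mem_image.1 (hSK l (mem_filter.1 hl).2)
    obtain ⟨hpK, rfl⟩ := mem_filter.1 hp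
    exact mem_image_of_mem (·.1.1) (mem_filter.2 ⟨hpK, rfl⟩ : p ∈ {q ∈ K | q.1.2 = p.1.2})

end LoadBalancing

lemma Finset.card_filter_orderEmbOfFin_eq {α : Type*} [LinearOrder α] {k : ℕ} (s : Finset α)
    (h : #s = k) (i : α) : #{a | s.orderEmbOfFin h a = i} = if i ∈ s then 1 else 0 := by
  rw [← card_image_of_injective _ (s.orderEmbOfFin h).injective, ← filter_image (p := (· = i)),
    image_orderEmbOfFin_univ, filter_eq']
  split_ifs <;> rfl

theorem stmt_4_general (m r : ℕ) (n : Fin r → ℕ) (F : Fin r → Finset (Fin m))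
    (hn : ∀ l, n l ≤ m - (F l).card) :
    ∃ g : (l : Fin r) → Fin (n l) → Fin m,
      (∀ l, Function.Injective (g l)) ∧
      (∀ l a, g l a ∉ F l) ∧
      (∀ i : Fin m,
        (∑ l, (Finset.univ.filter (fun a : Fin (n l) => g l a = i)).card)
          ≤ ⌈∑ l, (n l : ℝ) / ((m : ℝ) - ((F l).card : ℝ))⌉₊) := by
  have hcard (l : Fin r) : #(F l)ᶜ = m - #(F l) := by rw [card_compl, Fintype.card_fin]
  have hcast (l : Fin r) : (#(F l)ᶜ : ℝ) = m - #(F l) := by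
    rw [hcard, Nat.cast_sub ((card_le_univ _).trans_eq (Fintype.card_fin m))]
  obtain ⟨S, hSF, hS, hload⟩ :=
    LoadBalancing.exists_subsets_card_eq_of_sum_div_le (A := fun l => (F l)ᶜ)
    (fun l => (hn l).trans_eq (hcard l).symm) (by simpa only [hcast] using Nat.le_ceil _)
  refine ⟨fun l => (S l).orderEmbOfFin (hS l), fun l => ((S l).orderEmbOfFin (hS l)).injective,
    fun l a => mem_compl.1 (hSF l ((S l).orderEmbOfFin_mem (hS l) a)), fun i => ?_⟩
  simpa only [card_filter_orderEmbOfFin_eq, ← card_filter] using hload i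

theorem stmt_4 (m r : ℕ) (n : Fin r → ℕ) (F : Fin r → Finset (Fin m))
    (hF : ∀ l, (F l).card < m) (hn : ∀ l, n l ≤ m - (F l).card) :
    ∃ g : (l : Fin r) → Fin (n l) → Fin m,
      (∀ l, Function.Injective (g l)) ∧
      (∀ l a, g l a ∉ F l) ∧
      (∀ i : Fin m,
        (∑ l, (Finset.univ.filter (fun a : Fin (n l) => g l a = i)).card)
          ≤ ⌈∑ l, (n l : ℝ) / ((m : ℝ) - ((F l).card : ℝ))⌉₊) :=
  stmt_4_general m r n F hn
end

section
/- Let m ≥ 1 be a natural number, let h ≥ 0 and pmax ≥ 0 be reals, let r be a natural number, and let p : Fin r → Fin m → ℝ satisfy 0 ≤ p l j ≤ pmax for all l, j. Let A = ∑_{l, j} p l j. Then there exist permutations π : Fin r → Equiv.Perm (Fin m) such that, defining the load L i = h + ∑_{l} p l (π l i) for each machine i : Fin m, we have: (i) for all machines i, i', L i - L i' ≤ pmax; and (ii) for every machine i, L i ≤ h + A / m + pmax. -/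
/-!
Bag-LPT: process the bags one at a time, and within a bag give the largest job to the least
loaded machine, the second largest to the second least loaded, and so on. If the loads differ by
at most `pmax` before a bag, they still do afterwards: a machine that was not above another one
gains at most `pmax` on it, and a machine that was strictly above another one receives a job that
is not larger. Some machine carries at most the average load `h + A / m`, and every other machine
is within `pmax` of it.
-/

open Equiv Finset OrderDual
open scoped BigOperators

theorem exists_perm_monovary {α β : Type*} [LinearOrder α] [LinearOrder β] {n : ℕ}
    (f : Fin n → α) (g : Fin n → β) : ∃ σ : Perm (Fin n), Monovary (f ∘ σ) g := by
  refine ⟨(Tuple.sort g).symm.trans (Tuple.sort f), fun i j hij => Tuple.monotone_sort f ?_⟩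
  by_contra! hji
  have := Tuple.monotone_sort g hji.le
  simp only [Function.comp_apply, apply_symm_apply] at this
  exact this.not_gt hij

theorem exists_perm_antivary {α β : Type*} [LinearOrder α] [LinearOrder β] {n : ℕ}
    (f : Fin n → α) (g : Fin n → β) : ∃ σ : Perm (Fin n), Antivary (f ∘ σ) g := by
  obtain ⟨σ, hσ⟩ := exists_perm_monovary (toDual ∘ f) g
  exact ⟨σ, monovary_toDual_left.mp hσ⟩

theorem sub_le_of_antivary_add {ι : Type*} {L q : ι → ℝ} {c : ℝ}
    (hL : ∀ i j, L i - L j ≤ c) (hq : ∀ i, 0 ≤ q i ∧ q i ≤ c) (hLq : Antivary q L) (i j : ι) :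
    (L i + q i) - (L j + q j) ≤ c := by
  rcases le_or_gt (L i) (L j) with hij | hji
  · linarith [(hq i).2, (hq j).1]
  · linarith [hL i j, hLq hji]

theorem exists_perms_sum_sub_le {m : ℕ} {c : ℝ} (hc : 0 ≤ c) :
    ∀ (r : ℕ) (p : Fin r → Fin m → ℝ), (∀ l j, 0 ≤ p l j ∧ p l j ≤ c) →
    ∃ π : Fin r → Perm (Fin m), ∀ i i', (∑ l, p l (π l i)) - (∑ l, p l (π l i')) ≤ c
  | 0, _, _ => ⟨Fin.elim0, fun _ _ => by simpa using hc⟩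
  | r + 1, p, hp => by
    obtain ⟨π, hπ⟩ := exists_perms_sum_sub_le hc r (fun l => p l.castSucc) (fun l => hp _)
    let L i := ∑ l, p l.castSucc (π l i)
    obtain ⟨σ, hσ⟩ := exists_perm_antivary (p (Fin.last r)) L
    refine ⟨Fin.lastCases σ π, fun i i' => ?_⟩
    simpa [Fin.sum_univ_castSucc] using
      sub_le_of_antivary_add hπ (fun j => hp (Fin.last r) (σ j)) hσ i i'

theorem sum_sum_perm_eq {r m : ℕ} (p : Fin r → Fin m → ℝ) (π : Fin r → Perm (Fin m)) :
    ∑ i, ∑ l, p l (π l i) = ∑ l, ∑ j, p l j := by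
  rw [Finset.sum_comm]
  exact Finset.sum_congr rfl fun l _ => Equiv.sum_comp (π l) (p l)

theorem stmt_5_general (m : ℕ) (hm : 1 ≤ m) (h pmax : ℝ) (hpmax : 0 ≤ pmax)
    (r : ℕ) (p : Fin r → Fin m → ℝ)
    (hp : ∀ l j, 0 ≤ p l j ∧ p l j ≤ pmax) :
    ∃ π : Fin r → Equiv.Perm (Fin m),
      (∀ i i' : Fin m,
        (h + ∑ l, p l (π l i)) - (h + ∑ l, p l (π l i')) ≤ pmax) ∧
      (∀ i : Fin m,
        h + ∑ l, p l (π l i) ≤ h + (∑ l, ∑ j, p l j) / (m : ℝ) + pmax) := by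
  obtain ⟨π, hπ⟩ := exists_perms_sum_sub_le hpmax r p hp
  refine ⟨π, fun i i' => by linarith [hπ i i'], fun i => ?_⟩
  have : Nonempty (Fin m) := ⟨⟨0, hm⟩⟩
  obtain ⟨i₀, -, hi₀⟩ := exists_le_of_expect_le univ_nonempty
    (le_refl (𝔼 i, ∑ l, p l (π l i)))
  rw [Fintype.expect_eq_sum_div_card, sum_sum_perm_eq, Fintype.card_fin] at hi₀
  linarith [hπ i i₀]

theorem stmt_5 (m : ℕ) (hm : 1 ≤ m) (h pmax : ℝ) (hh : 0 ≤ h) (hpmax : 0 ≤ pmax)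
    (r : ℕ) (p : Fin r → Fin m → ℝ)
    (hp : ∀ l j, 0 ≤ p l j ∧ p l j ≤ pmax) :
    ∃ π : Fin r → Equiv.Perm (Fin m),
      (∀ i i' : Fin m,
        (h + ∑ l, p l (π l i)) - (h + ∑ l, p l (π l i')) ≤ pmax) ∧
      (∀ i : Fin m,
        h + ∑ l, p l (π l i) ≤ h + (∑ l, ∑ j, p l j) / (m : ℝ) + pmax) :=
  stmt_5_general m hm h pmax hpmax r p hp
end
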